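/- With the iteration y^{(0)}_i = exp(x_i/2^k), λ_j = (Σ_i (y^{(j-1)}_i)^2)^{-1/2}, y^{(j)}_i = (λ_j y^{(j-1)}_i)^2, one has, for every 1 ≤ j ≤ k, y^{(j)}_i = Softmax(x/2^{k-j})_i for all i. -/
import Mathlib


noncomputable def softmax (n : ℕ) (x : Fin n → ℝ) : Fin n → ℝ :=
  fun i => Real.exp (x i) / ∑ j, Real.exp (x j)

private lemma rpow_half_sq {S a : ℝ} (hS : 0 < S) :
    ((S : ℝ) ^ (-(1 / 2 : ℝ)) * a) ^ 2 = a ^ 2 / S := by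
  rw [mul_pow, ← Real.rpow_natCast (S ^ (-(1/2:ℝ))) 2, ← Real.rpow_mul hS.le]
  norm_num [Real.rpow_neg_one]
  ring

private lemma sum_exp_pos {n : ℕ} (hn : 1 ≤ n) (f : Fin n → ℝ) :
    0 < ∑ j, Real.exp (f j) := by
  apply Finset.sum_pos (fun i _ => Real.exp_pos _)
  simpa [Finset.univ_nonempty_iff] using Fin.pos_iff_nonempty.mp hn

theorem normalize_and_square_invariant (n : ℕ) (hn : 1 ≤ n) (k : ℕ) (hk : 1 ≤ k)
    (x : Fin n → ℝ) (y : ℕ → Fin n → ℝ)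
    (h0 : ∀ i, y 0 i = Real.exp (x i / 2 ^ k))
    (hstep : ∀ j, j < k → ∀ i,
      y (j + 1) i = ((∑ l, (y j l) ^ 2) ^ (-(1 / 2 : ℝ)) * y j i) ^ 2) :
    ∀ j, 1 ≤ j → j ≤ k → ∀ i,
      y j i = softmax n (fun i => x i / 2 ^ (k - j)) i := by
  -- key step: if y j is a positive multiple of the exponentials, next step is softmax
  have key : ∀ j, j < k → ∀ c : ℝ, 0 < c →
      (∀ i, y j i = c * Real.exp (x i / 2 ^ (k - j))) →
      ∀ i, y (j + 1) i = Real.exp (x i / 2 ^ (k - (j + 1))) /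
        ∑ l, Real.exp (x l / 2 ^ (k - (j + 1))) := by
    intro j hjk c hc hyp i
    have hsq : ∀ i, (y j i) ^ 2 = c ^ 2 * Real.exp (x i / 2 ^ (k - (j+1))) := by
      intro i
      rw [hyp i, mul_pow, ← Real.exp_nat_mul]
      congr 2
      have h2 : (2:ℝ) ^ (k - j) = 2 * 2 ^ (k - (j+1)) := by
        rw [← pow_succ']
        congr 1
        omega
      rw [h2]
      have h2p : (0:ℝ) < 2 ^ (k - (j+1)) := by positivity
      field_simp
      ring
    have hsum : (∑ l, (y j l) ^ 2) =
        c ^ 2 * ∑ l, Real.exp (x l / 2 ^ (k - (j+1))) := by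
      rw [Finset.mul_sum]
      exact Finset.sum_congr rfl fun l _ => hsq l
    have hEpos : 0 < ∑ l, Real.exp (x l / 2 ^ (k - (j+1))) := sum_exp_pos hn _
    have hSpos : 0 < ∑ l, (y j l) ^ 2 := by
      rw [hsum]; positivity
    rw [hstep j hjk i, rpow_half_sq hSpos, hsq i, hsum]
    rw [mul_div_mul_left _ _ (by positivity)]
  have main : ∀ j, 1 ≤ j → j ≤ k → ∀ i, y j i = Real.exp (x i / 2 ^ (k - j)) /
      ∑ l, Real.exp (x l / 2 ^ (k - j)) := by
    intro j
    induction j with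
    | zero => omega
    | succ m ih =>
      intro _ hmk
      rcases Nat.eq_zero_or_pos m with hm | hm
      · subst hm
        exact key 0 (by omega) 1 one_pos (by simpa using h0)
      · have hT : 0 < ∑ l, Real.exp (x l / 2 ^ (k - m)) := sum_exp_pos hn _
        refine key m (by omega) (∑ l, Real.exp (x l / 2 ^ (k - m)))⁻¹
          (inv_pos.mpr hT) ?_
        intro i
        rw [ih hm (by omega) i, div_eq_inv_mul]
  intro j h1 h2 i
  rw [main j h1 h2 i]
  rfl
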